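/- arXiv:1402.5499 — 7 statements merged into one kernel-verified Lean document; each statement's English description precedes it below -/
import Mathlib

section
/- For every element a of the group algebra ℂ[G], the integral ∫_{B_H} κ(a) dν equals the coefficient of the identity element of G in a. (Thus κ carries the canonical trace of the group algebra to integration against ν.) -/
open MeasureTheory Filter Topology
open scoped ENNReal

/-! Every `g ∈ G` is `t_S` for `S` its support, so `κ` sends the basis element `g` to `R_S`.
Splitting `B_H` into the `2^|S|` cylinders prescribed on `S`, each of measure `2^-|S|`,
gives `∫ R_S dν = 2^-|S| ∑_{T ⊆ S} (-1)^|T|`, which vanishes unless `S = ∅`, i.e. unless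
`g = 1`. -/

/-- The Rademacher function `R_S(x) = ∏_{s ∈ S} (−1)^{x(s)}` on the Bernoulli space
`B_H = ∏_{h ∈ H} {0,1}` (with `{0,1}` encoded as `Bool`); `R_∅ ≡ 1`. -/
def Rademacher {H : Type*} (S : Finset H) : (H → Bool) → ℂ := fun x =>
  ∏ s ∈ S, (if x s then (-1 : ℂ) else 1)

/-- `ν` is the product of the uniform (`1/2`, `1/2`) measures on the factors: it is a
probability measure giving each cylinder set, prescribed on a finite set `T` of
coordinates, measure `(1/2)^{|T|}`. -/
def IsBernoulliMeasure {H : Type*} (ν : Measure (H → Bool)) : Prop :=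
  IsProbabilityMeasure ν ∧
  ∀ (T : Finset H) (b : H → Bool),
    ν {x : H → Bool | ∀ h ∈ T, x h = b h} = (1 / 2 : ℝ≥0∞) ^ T.card

/-- `G = ⊕_{h ∈ H} ℤ/2ℤ`, written multiplicatively. -/
abbrev BernoulliDual (H : Type*) : Type _ := Multiplicative (H →₀ ZMod 2)

/-- For a finite `S ⊆ H`, `t_S ∈ G` is the element equal to `1` at the coordinates in
`S` and `0` elsewhere (so that `t_S · t_{S'} = t_{S △ S'}`). -/
noncomputable def tS {H : Type*} [DecidableEq H] (S : Finset H) : BernoulliDual H :=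
  Multiplicative.ofAdd (∑ s ∈ S, Finsupp.single s (1 : ZMod 2))

open Finset

section Rademacher

variable {H : Type*}

lemma Rademacher_apply_eq_neg_one_pow (S : Finset H) (x : H → Bool) :
    Rademacher S x = (-1 : ℂ) ^ #{s ∈ S | x s} := by
  rw [Rademacher, prod_ite, prod_const, prod_const, one_pow, mul_one]

lemma norm_Rademacher_apply (S : Finset H) (x : H → Bool) : ‖Rademacher S x‖ = 1 := by
  simp [Rademacher_apply_eq_neg_one_pow]

lemma measurable_Rademacher (S : Finset H) : Measurable (Rademacher S) :=
  Finset.measurable_prod S fun s _ =>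
    (measurable_of_countable fun b : Bool => if b then (-1 : ℂ) else 1).comp
      (measurable_pi_apply s)

lemma integrable_Rademacher (ν : Measure (H → Bool)) [IsFiniteMeasure ν] (S : Finset H) :
    Integrable (Rademacher S) ν :=
  (integrable_const (1 : ℝ)).mono' (measurable_Rademacher S).aestronglyMeasurable
    (.of_forall fun x => (norm_Rademacher_apply S x).le)

lemma measurableSet_cylinder (S : Finset H) (b : H → Bool) :
    MeasurableSet {x : H → Bool | ∀ h ∈ S, x h = b h} := by
  simp only [Set.ofPred_forall]
  exact .biInter S.countable_toSet fun h _ => measurable_pi_apply h (measurableSet_singleton _)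

variable [DecidableEq H]

lemma Rademacher_apply_eq_sum_indicator (S : Finset H) (x : H → Bool) :
    Rademacher S x = ∑ T ∈ S.powerset,
      {x | ∀ h ∈ S, x h = decide (h ∈ T)}.indicator (fun _ => (-1 : ℂ) ^ #T) x := by
  have mem_cylinder_iff : ∀ T ∈ S.powerset,
      x ∈ {y | ∀ h ∈ S, y h = decide (h ∈ T)} ↔ T = {s ∈ S | x s} := by
    intro T hT
    rw [mem_powerset] at hT
    constructor
    · intro (hx : ∀ h ∈ S, x h = decide (h ∈ T))
      ext h
      by_cases hS : h ∈ S <;> simp_all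
    · rintro rfl h hS
      simp [hS]
  have hx : {s ∈ S | x s} ∈ S.powerset := mem_powerset.2 (filter_subset _ S)
  rw [sum_eq_single_of_mem _ hx, Set.indicator_of_mem ((mem_cylinder_iff _ hx).2 rfl),
    Rademacher_apply_eq_neg_one_pow]
  exact fun T hT hne => Set.indicator_of_notMem (fun hx => hne ((mem_cylinder_iff T hT).1 hx)) _

lemma integral_Rademacher {ν : Measure (H → Bool)} (hν : IsBernoulliMeasure ν) (S : Finset H) :
    ∫ x, Rademacher S x ∂ν = if S = ∅ then 1 else 0 := by
  have := hν.1
  have integral_cylinder : ∀ T ∈ S.powerset,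
      ∫ x, {x | ∀ h ∈ S, x h = decide (h ∈ T)}.indicator (fun _ => (-1 : ℂ) ^ #T) x ∂ν
        = (2⁻¹ : ℂ) ^ #S * (-1) ^ #T := by
    intro T _
    rw [integral_indicator_const _ (measurableSet_cylinder S _), measureReal_def, hν.2]
    simp [Complex.real_smul]
  simp_rw [Rademacher_apply_eq_sum_indicator S]
  rw [integral_finsetSum _ fun T _ =>
      (integrable_const _).indicator (measurableSet_cylinder S _),
    sum_congr rfl integral_cylinder, ← mul_sum]
  have := congrArg (Int.cast : ℤ → ℂ) (sum_powerset_neg_one_pow_card (x := S))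
  push_cast at this
  split_ifs at this ⊢ with hS <;> simp_all

end Rademacher

section GroupAlgebra

variable {H : Type*} [DecidableEq H]

lemma tS_support_toAdd (g : BernoulliDual H) : tS (Multiplicative.toAdd g).support = g := by
  have eq_one_of_ne_zero : ∀ a : ZMod 2, a ≠ 0 → a = 1 := by decide
  calc tS (Multiplicative.toAdd g).support
      = Multiplicative.ofAdd (∑ s ∈ (Multiplicative.toAdd g).support,
          Finsupp.single s (Multiplicative.toAdd g s)) := by
        refine congrArg _ (sum_congr rfl fun s hs => ?_)
        rw [eq_one_of_ne_zero _ (Finsupp.mem_support_iff.1 hs)]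
    _ = g := congrArg _ (Finsupp.sum_single _)

variable {κ : MonoidAlgebra ℂ (BernoulliDual H) →ₐ[ℂ] ((H → Bool) → ℂ)}

lemma apply_single_eq_smul_Rademacher
    (hκ : ∀ S : Finset H, κ (MonoidAlgebra.of ℂ (BernoulliDual H) (tS S)) = Rademacher S)
    (g : BernoulliDual H) (c : ℂ) :
    κ (MonoidAlgebra.single g c) = c • Rademacher (Multiplicative.toAdd g).support := by
  rw [← hκ, tS_support_toAdd, MonoidAlgebra.of_apply, ← map_smul, MonoidAlgebra.smul_single',
    mul_one]

lemma integrable_apply_single_and_integral_eq_coeff_one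
    (hκ : ∀ S : Finset H, κ (MonoidAlgebra.of ℂ (BernoulliDual H) (tS S)) = Rademacher S)
    {ν : Measure (H → Bool)} (hν : IsBernoulliMeasure ν) (g : BernoulliDual H) (c : ℂ) :
    Integrable (κ (MonoidAlgebra.single g c)) ν ∧
      ∫ x, κ (MonoidAlgebra.single g c) x ∂ν = (MonoidAlgebra.single g c).coeff 1 := by
  have := hν.1
  have support_eq_empty_iff : (Multiplicative.toAdd g).support = ∅ ↔ g = 1 := by
    rw [Finsupp.support_eq_empty, toAdd_eq_zero]
  rw [apply_single_eq_smul_Rademacher hκ]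
  refine ⟨(integrable_Rademacher ν _).smul c, ?_⟩
  simp only [Pi.smul_apply, smul_eq_mul]
  rw [integral_const_mul, integral_Rademacher hν, MonoidAlgebra.coeff_single,
    Finsupp.single_apply]
  split_ifs <;> simp_all [eq_comm]

end GroupAlgebra

theorem stmt2_general {H : Type*} [DecidableEq H]
    (ν : Measure (H → Bool)) (hν : IsBernoulliMeasure ν)
    (κ : MonoidAlgebra ℂ (BernoulliDual H) →ₐ[ℂ] ((H → Bool) → ℂ))
    (hκ : ∀ S : Finset H, κ (MonoidAlgebra.of ℂ (BernoulliDual H) (tS S)) = Rademacher S)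
    (a : MonoidAlgebra ℂ (BernoulliDual H)) :
    ∫ x, κ a x ∂ν = a.coeff 1 := by
  suffices Integrable (κ a) ν ∧ ∫ x, κ a x ∂ν = a.coeff 1 from this.2
  induction a using MonoidAlgebra.induction_linear with
  | zero => simp
  | add a b ha hb =>
    refine ⟨(map_add κ a b).symm ▸ ha.1.add hb.1, ?_⟩
    simp only [map_add, Pi.add_apply, integral_add ha.1 hb.1, ha.2, hb.2, MonoidAlgebra.coeff_add,
      Finsupp.add_apply]
  | single g c => exact integrable_apply_single_and_integral_eq_coeff_one hκ hν g c

/-- for every `a ∈ ℂ[G]`, `∫_{B_H} κ(a) dν` equals the coefficient of the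
identity element of `G` in `a`; that is, `κ` carries the canonical trace of the group
algebra to integration against `ν`. -/
theorem stmt2 {H : Type*} [Group H] [Countable H] [Infinite H] [DecidableEq H]
    (ν : Measure (H → Bool)) (hν : IsBernoulliMeasure ν)
    (κ : MonoidAlgebra ℂ (BernoulliDual H) →ₐ[ℂ] ((H → Bool) → ℂ))
    (hκ : ∀ S : Finset H, κ (MonoidAlgebra.of ℂ (BernoulliDual H) (tS S)) = Rademacher S)
    (a : MonoidAlgebra ℂ (BernoulliDual H)) :
    ∫ x, κ a x ∂ν = a.coeff 1 :=
  stmt2_general ν hν κ hκ a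
end

section
/- The ℂ-algebra of diagonal periodic operators — equivalently, the ℂ-algebra (under pointwise operations) of all functions d : ℤ → ℂ that are 2^n-periodic for some n ≥ 0 — is isomorphic as a ℂ-algebra to the group algebra ℂ[ℤ(2^∞)] of the Prüfer 2-group ℤ(2^∞), where ℤ(2^∞) is the subgroup {q ∈ ℚ/ℤ : 2^n·q = 0 for some n ≥ 0} of ℚ/ℤ. -/
open Filter Topology

/-- The group `ℚ/ℤ`. -/
abbrev QmodZ : Type := ℚ ⧸ AddSubgroup.zmultiples (1 : ℚ)

/-- The Prüfer 2-group `ℤ(2^∞) = {q ∈ ℚ/ℤ : 2^n·q = 0 for some n ≥ 0}`, as a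
subgroup of `ℚ/ℤ`. -/
def Prufer2 : AddSubgroup QmodZ where
  carrier := {q | ∃ n : ℕ, ((2 : ℤ) ^ n) • q = 0}
  zero_mem' := ⟨0, smul_zero _⟩
  add_mem' := by
    rintro a b ⟨n, hn⟩ ⟨m, hm⟩
    refine ⟨n + m, ?_⟩
    have h1 : ((2 : ℤ) ^ (n + m)) • a = 0 := by
      rw [show ((2 : ℤ) ^ (n + m)) = 2 ^ m * 2 ^ n by ring, mul_smul, hn, smul_zero]
    have h2 : ((2 : ℤ) ^ (n + m)) • b = 0 := by
      rw [show ((2 : ℤ) ^ (n + m)) = 2 ^ n * 2 ^ m by ring, mul_smul, hm, smul_zero]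
    rw [smul_add, h1, h2, add_zero]
  neg_mem' := by
    rintro a ⟨n, hn⟩
    exact ⟨n, by rw [smul_neg, hn, neg_zero]⟩

/-!
The characters `x ↦ e^{2πiqx}` of `ℤ`, for `q ∈ ℤ(2^∞)`, are pairwise distinct, hence linearly
independent (Dedekind), so the algebra map `ℂ[ℤ(2^∞)] → (ℤ → ℂ)` they induce is injective. Its
image is the span of the functions `x ↦ ζ^x` with `ζ` a `2^n`-th root of unity for some `n`.
For fixed `n` these are `2^n` independent `2^n`-periodic functions, while the `2^n`-periodic
functions form a space of dimension `2^n`; so they span it, and the image is the union over `n`.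
-/

open Function Submodule Module

section Periodic

variable (k : Type*) [Field k]

def periodicFunctions (c : ℤ) : Submodule k (ℤ → k) where
  carrier := {d | Periodic d c}
  add_mem' := Periodic.add
  zero_mem' := fun _ => rfl
  smul_mem' a _ hd := hd.smul a

variable {k}

theorem mem_periodicFunctions {c : ℤ} {d : ℤ → k} : d ∈ periodicFunctions k c ↔ Periodic d c :=
  Iff.rfl

theorem periodicFunctions_le_of_dvd {c c' : ℤ} (h : c ∣ c') :
    periodicFunctions k c ≤ periodicFunctions k c' := by
  obtain ⟨m, rfl⟩ := h
  intro d (hd : Periodic d c)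
  rw [mem_periodicFunctions, mul_comm]
  exact hd.int_mul m

variable (k)

theorem periodicFunctions_eq_range_funLeft (N : ℕ) :
    periodicFunctions k N = LinearMap.range (LinearMap.funLeft k k ((↑) : ℤ → ZMod N)) := by
  ext d
  constructor
  · intro hd
    refine ⟨fun z => d (ZMod.cast z : ℤ), funext fun x => ?_⟩
    rw [LinearMap.funLeft_apply, ZMod.coe_intCast, Int.emod_def, mul_comm]
    exact hd.sub_int_mul_eq _
  · rintro ⟨f, rfl⟩ x
    simp

theorem finrank_periodicFunctions (N : ℕ) [NeZero N] :
    finrank k (periodicFunctions k N) = N := by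
  rw [periodicFunctions_eq_range_funLeft, LinearMap.finrank_range_of_inj
    (LinearMap.funLeft_injective_of_surjective _ _ _ ZMod.intCast_surjective),
    Module.finrank_fintype_fun_eq_card, ZMod.card]

instance (N : ℕ) [NeZero N] : FiniteDimensional k (periodicFunctions k N) := by
  rw [periodicFunctions_eq_range_funLeft]
  infer_instance

end Periodic

section ZpowChar

variable (k : Type*) [Field k]

def zpowChar : kˣ →* (ℤ → k) where
  toFun ζ x := ↑(ζ ^ x)
  map_one' := by ext; simp
  map_mul' ζ η := by ext; simp [mul_zpow]

variable {k}

@[simp]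
theorem zpowChar_apply (ζ : kˣ) (x : ℤ) : zpowChar k ζ x = ↑(ζ ^ x) := rfl

theorem zpowChar_injective : Injective (zpowChar k) := fun ζ η h =>
  Units.ext <| by simpa using congrFun h 1

theorem linearIndependent_zpowChar : LinearIndependent k (zpowChar k) :=
  (linearIndependent_monoidHom (Multiplicative ℤ) k).comp
    (fun ζ => (Units.coeHom k).comp (zpowersHom kˣ ζ))
    fun _ _ h => zpowChar_injective (congrArg (⇑) h)

theorem zpowChar_mem_periodicFunctions {N : ℕ} {ζ : kˣ} (hζ : ζ ∈ rootsOfUnity N k) :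
    zpowChar k ζ ∈ periodicFunctions k N := fun x => by
  simp [zpow_add, (mem_rootsOfUnity N ζ).1 hζ]

theorem span_zpowChar_rootsOfUnity (N : ℕ) [NeZero N] (hN : Nat.card (rootsOfUnity N k) = N) :
    span k (Set.range fun ζ : rootsOfUnity N k => zpowChar k ζ) = periodicFunctions k N := by
  have := Fintype.ofFinite (rootsOfUnity N k)
  refine eq_of_le_of_finrank_le (span_le.2 <| Set.range_subset_iff.2 fun ζ =>
    zpowChar_mem_periodicFunctions ζ.2) ?_
  have hli : LinearIndependent k fun ζ : rootsOfUnity N k => zpowChar k ζ :=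
    linearIndependent_zpowChar.comp _ Subtype.val_injective
  rw [finrank_periodicFunctions, finrank_span_eq_card hli, ← Nat.card_eq_fintype_card, hN]

end ZpowChar

namespace AddMonoidAlgebra

variable {k A G : Type*} [CommSemiring k] [Semiring A] [Algebra k A] [AddMonoid G]

theorem toLinearMap_lift (f : Multiplicative G →* A) :
    (lift k A G f).toLinearMap =
      Finsupp.linearCombination k (fun g => f (.ofAdd g)) ∘ₗ (coeffLinearEquiv k).toLinearMap := by
  ext x
  simp [lift_apply, Finsupp.linearCombination_apply]

theorem lift_injective {f : Multiplicative G →* A} (hf : LinearIndependent k f) :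
    Injective (lift k A G f) := by
  rw [← AlgHom.coe_toLinearMap, toLinearMap_lift, LinearMap.coe_comp]
  exact Injective.comp hf (coeffLinearEquiv k).injective

theorem range_lift (f : Multiplicative G →* A) :
    Set.range (lift k A G f) = span k (Set.range f) := by
  rw [← AlgHom.coe_toLinearMap, ← LinearMap.coe_range, toLinearMap_lift,
    LinearMap.range_comp_of_range_eq_top _ (LinearEquiv.range _), Finsupp.range_linearCombination]
  rfl

end AddMonoidAlgebra

open Complex in
noncomputable def ratExp : ℚ →+ Additive ℂˣ where
  toFun r := .ofMul (Units.mk0 (exp (2 * Real.pi * I * r)) (exp_ne_zero _))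
  map_zero' := by ext; simp
  map_add' r s := by ext; simp [mul_add, exp_add]

open Complex in
theorem coe_toMul_ratExp (r : ℚ) : ((ratExp r).toMul : ℂ) = exp (2 * Real.pi * I * r) := rfl

theorem ker_ratExp : ratExp.ker = AddSubgroup.zmultiples 1 := by
  ext r
  rw [AddMonoidHom.mem_ker, ← toMul_eq_one, Units.ext_iff, coe_toMul_ratExp, Units.val_one,
    Complex.exp_eq_one_iff, AddSubgroup.mem_zmultiples_iff]
  refine exists_congr fun n => ?_
  rw [zsmul_one, eq_comm, mul_comm, mul_right_inj' Complex.two_pi_I_ne_zero]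
  exact_mod_cast Iff.rfl

namespace QmodZ

noncomputable def exp : QmodZ →+ Additive ℂˣ := QuotientAddGroup.lift _ ratExp ker_ratExp.ge

theorem exp_injective : Injective exp :=
  (QuotientAddGroup.injective_lift_iff _ _ _).2 ker_ratExp.symm

theorem toMul_exp_mem_rootsOfUnity {N : ℕ} {q : QmodZ} (h : N • q = 0) :
    (exp q).toMul ∈ rootsOfUnity N ℂ := by
  rw [mem_rootsOfUnity, ← toMul_nsmul, ← map_nsmul, h, map_zero, toMul_zero]

theorem exists_exp_eq {N : ℕ} [NeZero N] {ζ : ℂˣ} (hζ : ζ ∈ rootsOfUnity N ℂ) :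
    ∃ q : QmodZ, N • q = 0 ∧ (exp q).toMul = ζ := by
  obtain ⟨i, -, hi⟩ := (Complex.mem_rootsOfUnity N ζ).1 hζ
  refine ⟨((i / N : ℚ) : QmodZ), ?_, Units.ext ?_⟩
  · rw [← QuotientAddGroup.mk_nsmul, QuotientAddGroup.eq_zero_iff, nsmul_eq_mul,
      mul_div_cancel₀ _ (by exact_mod_cast NeZero.ne N)]
    exact ⟨i, by simp⟩
  · rw [← hi, exp, QuotientAddGroup.lift_mk, coe_toMul_ratExp]
    push_cast
    rfl

end QmodZ

theorem mem_Prufer2_iff {q : QmodZ} : q ∈ Prufer2 ↔ ∃ n : ℕ, 2 ^ n • q = 0 :=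
  exists_congr fun n => by rw [← natCast_zsmul, Nat.cast_pow, Nat.cast_ofNat]

noncomputable def prufer2Char : Multiplicative Prufer2 →* ℂˣ :=
  AddMonoidHom.toMultiplicativeLeft (QmodZ.exp.comp Prufer2.subtype)

theorem prufer2Char_injective : Injective prufer2Char :=
  Additive.toMul.injective.comp <| QmodZ.exp_injective.comp <|
    Subtype.val_injective.comp Multiplicative.toAdd.injective

variable (k : Type*) [Field k] in
theorem mem_iSup_periodicFunctions_two_pow {d : ℤ → k} :
    d ∈ ⨆ n : ℕ, periodicFunctions k (2 ^ n) ↔ ∃ n : ℕ, Periodic d (2 ^ n) :=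
  mem_iSup_of_directed _ <| Monotone.directed_le fun _ _ h =>
    periodicFunctions_le_of_dvd (pow_dvd_pow 2 h)

theorem span_range_zpowChar_prufer2Char :
    span ℂ (Set.range ((zpowChar ℂ).comp prufer2Char)) = ⨆ n : ℕ, periodicFunctions ℂ (2 ^ n) := by
  apply le_antisymm
  · refine span_le.2 <| Set.range_subset_iff.2 fun q => ?_
    obtain ⟨n, hn⟩ := mem_Prufer2_iff.1 q.toAdd.2
    have := zpowChar_mem_periodicFunctions (QmodZ.toMul_exp_mem_rootsOfUnity hn)
    push_cast at this
    exact mem_iSup_of_mem n this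
  · refine iSup_le fun n => ?_
    rw [show (2 : ℤ) ^ n = ((2 ^ n : ℕ) : ℤ) by push_cast; rfl,
      ← span_zpowChar_rootsOfUnity _ (Complex.card_rootsOfUnity _)]
    refine span_mono <| Set.range_subset_iff.2 fun ζ => ?_
    obtain ⟨q, hq, hqζ⟩ := QmodZ.exists_exp_eq ζ.2
    exact ⟨.ofAdd ⟨q, mem_Prufer2_iff.2 ⟨n, hq⟩⟩, by simp [prufer2Char, hqζ]⟩

/-- the ℂ-algebra (under pointwise operations) of all functions
`d : ℤ → ℂ` that are `2^n`-periodic for some `n ≥ 0` is isomorphic as a ℂ-algebra to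
the group algebra `ℂ[ℤ(2^∞)]` of the Prüfer 2-group: there is an injective ℂ-algebra
homomorphism from `ℂ[ℤ(2^∞)]` to the algebra of functions `ℤ → ℂ` whose range is
exactly the set of eventually-`2^n`-periodic functions. -/
theorem stmt7 :
    ∃ F : AddMonoidAlgebra ℂ Prufer2 →ₐ[ℂ] (ℤ → ℂ),
      Function.Injective F ∧
      Set.range F = {d : ℤ → ℂ | ∃ n : ℕ, ∀ x : ℤ, d (x + 2 ^ n) = d x} := by
  refine ⟨AddMonoidAlgebra.lift ℂ (ℤ → ℂ) Prufer2 ((zpowChar ℂ).comp prufer2Char),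
    AddMonoidAlgebra.lift_injective (linearIndependent_zpowChar.comp _ prufer2Char_injective), ?_⟩
  ext d
  rw [AddMonoidAlgebra.range_lift, span_range_zpowChar_prufer2Char, SetLike.mem_coe,
    mem_iSup_periodicFunctions_two_pow]
  rfl
end

section
/- Let A be a periodic operator and k ≥ 1 be such that A(x+2^k, y+2^k) = A(x,y) for all x,y and A(x,y) = 0 whenever |x−y| ≥ 2^k. Then for all integers k < n ≤ m, the rank over ℂ of the 2^m × 2^m matrix D^n_m(A_n) − A_m is at most 2^{k+1}·2^{m−n}. Consequently the sequence of matrices {A_n} is Cauchy with respect to the normalized rank pseudometric d(B,C) = rank(B−C)/size. -/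
open Filter Topology

/-- A *periodic operator* is a function `A : ℤ × ℤ → ℂ` such that for some `n ≥ 1`,
`A(x,y) = 0` whenever `|x−y| > 2^n` and `A(x+2^n, y+2^n) = A(x,y)` for all `x, y ∈ ℤ`. -/
def IsPeriodicOp (A : ℤ → ℤ → ℂ) : Prop :=
  ∃ n : ℕ, 1 ≤ n ∧ (∀ x y : ℤ, |x - y| > 2 ^ n → A x y = 0) ∧
    (∀ x y : ℤ, A (x + 2 ^ n) (y + 2 ^ n) = A x y)

/-- The truncation `A_n`, viewed as the `2^n × 2^n` matrix `(A(x,y))_{0 ≤ x,y ≤ 2^n−1}`. -/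
noncomputable def trunc (A : ℤ → ℤ → ℂ) (n : ℕ) : Matrix (Fin (2 ^ n)) (Fin (2 ^ n)) ℂ :=
  fun i j => A ((i : ℕ) : ℤ) ((j : ℕ) : ℤ)

/-- The block-diagonal embedding `D^n_m : Mat_{2^n}(ℂ) → Mat_{2^m}(ℂ)` placing `2^{m−n}`
copies of its argument along the diagonal. -/
def blockEmbed (n m : ℕ) (B : Matrix (Fin (2 ^ n)) (Fin (2 ^ n)) ℂ) :
    Matrix (Fin (2 ^ m)) (Fin (2 ^ m)) ℂ :=
  fun i j =>
    if (i : ℕ) / 2 ^ n = (j : ℕ) / 2 ^ n then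
      B ⟨(i : ℕ) % 2 ^ n, Nat.mod_lt _ (by positivity)⟩
        ⟨(j : ℕ) % 2 ^ n, Nat.mod_lt _ (by positivity)⟩
    else 0

/-! Periodicity with a period dividing `2^n` makes every diagonal `2^n`-block of `A_m` equal
to `A_n`, so `D^n_m(A_n) - A_m` lives off the diagonal blocks. As `A` vanishes at distance
`≥ 2^k` from the diagonal, only the rows within `2^k` of a block boundary meet an off-diagonal
block: at most `2^{k+1}` rows per block, and the rank is at most the number of nonzero rows. -/

open Finset

section Periodic

variable {β : Type*} {A : ℤ → ℤ → β} {p : ℤ}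

lemma periodic_along_diagonal (hper : ∀ x y : ℤ, A (x + p) (y + p) = A x y) (x y : ℤ) :
    Function.Periodic (fun s => A (x + s) (y + s)) p := fun s => by
  simpa only [add_assoc] using hper (x + s) (y + s)

lemma apply_eq_apply_mod_of_div_eq (hper : ∀ x y : ℤ, A (x + p) (y + p) = A x y) {b : ℕ}
    (hpb : p ∣ b) {i j : ℕ} (h : i / b = j / b) :
    A i j = A (i % b : ℕ) (j % b : ℕ) := by
  obtain ⟨c, hc⟩ := hpb
  have hdecomp : ∀ l : ℕ, (l : ℤ) = (l % b : ℕ) + ((l / b : ℕ) * c : ℤ) * p := fun l => by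
    rw [mul_right_comm, mul_assoc, ← hc]
    exact_mod_cast (Nat.mod_add_div' l b).symm
  have := (periodic_along_diagonal hper (i % b : ℕ) (j % b : ℕ)).int_mul ((i / b : ℕ) * c) 0
  simp only [zero_add, add_zero, Int.cast_id] at this
  rw [hdecomp i, hdecomp j, ← h, this]

end Periodic

lemma le_abs_sub_of_div_ne {b w i j : ℕ} (h : i / b ≠ j / b) (hw : w ≤ i % b)
    (hwb : i % b + w ≤ b) : (w : ℤ) ≤ |(i : ℤ) - j| := by
  have hb : 0 < b := Nat.pos_of_ne_zero fun hb => h (by simp [hb])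
  have hi := Nat.div_add_mod i b
  have hj := Nat.div_add_mod j b
  rw [le_abs]
  rcases lt_or_gt_of_ne h with hlt | hlt
  · have hblock : b * (i / b + 1) ≤ b * (j / b) := Nat.mul_le_mul_left b hlt
    right
    rw [mul_add_one] at hblock
    omega
  · have hblock : b * (j / b + 1) ≤ b * (i / b) := Nat.mul_le_mul_left b hlt
    have hjb := Nat.mod_lt j hb
    left
    rw [mul_add_one] at hblock
    omega

lemma card_filter_mod_le {N b q : ℕ} (hN : N ≤ q * b) (P : ℕ → Prop) [DecidablePred P] :
    #{i : Fin N | P (i % b)} ≤ q * #{r ∈ range b | P r} := by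
  rw [← card_range q, ← card_product]
  refine card_le_card_of_injOn (fun i => ((i : ℕ) / b, (i : ℕ) % b)) (fun i hi => ?_) ?_
  · have hb : 0 < b := Nat.pos_of_ne_zero fun hb => by simpa [hb] using i.2.trans_le hN
    simp only [coe_filter, mem_univ, true_and, Set.mem_ofPred_eq] at hi
    simp only [coe_product, coe_range, coe_filter, mem_range, Set.mem_prod, Set.mem_Iio,
      Set.mem_ofPred_eq]
    exact ⟨Nat.div_lt_of_lt_mul (i.2.trans_le (hN.trans_eq (mul_comm q b))),
      Nat.mod_lt _ hb, hi⟩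
  · intro i _ j _ hij
    simp only [Prod.mk.injEq] at hij
    exact Fin.ext (by rw [← Nat.div_add_mod i b, ← Nat.div_add_mod j b, hij.1, hij.2])

lemma card_filter_range_lt_or_lt_add_le (b w : ℕ) :
    #{r ∈ range b | r < w ∨ b < r + w} ≤ 2 * w := by
  calc #{r ∈ range b | r < w ∨ b < r + w} ≤ #(range w ∪ Ico (b - w) b) := by
        refine card_le_card fun r hr => ?_
        simp only [mem_filter, mem_range] at hr
        simp only [mem_union, mem_range, mem_Ico]
        omega
    _ ≤ w + (b - (b - w)) := by
        simpa only [card_range, Nat.card_Ico] using card_union_le (range w) (Ico (b - w) b)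
    _ ≤ 2 * w := by omega

section Truncation

variable {A : ℤ → ℤ → ℂ} {k n m : ℕ}

lemma blockEmbed_trunc_apply_of_interior (hper : ∀ x y : ℤ, A (x + 2 ^ k) (y + 2 ^ k) = A x y)
    (hsupp : ∀ x y : ℤ, (2 : ℤ) ^ k ≤ |x - y| → A x y = 0) (hkn : k ≤ n) (i j : Fin (2 ^ m))
    (hi : 2 ^ k ≤ (i : ℕ) % 2 ^ n) (hi' : (i : ℕ) % 2 ^ n + 2 ^ k ≤ 2 ^ n) :
    blockEmbed n m (trunc A n) i j = trunc A m i j := by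
  unfold blockEmbed trunc
  split_ifs with h
  · refine (apply_eq_apply_mod_of_div_eq hper ?_ h).symm
    exact_mod_cast pow_dvd_pow 2 hkn
  · exact (hsupp _ _ (by exact_mod_cast le_abs_sub_of_div_ne h hi hi')).symm

theorem rank_blockEmbed_trunc_sub_trunc_le
    (hper : ∀ x y : ℤ, A (x + 2 ^ k) (y + 2 ^ k) = A x y)
    (hsupp : ∀ x y : ℤ, (2 : ℤ) ^ k ≤ |x - y| → A x y = 0) (hkn : k ≤ n) (hnm : n ≤ m) :
    (blockEmbed n m (trunc A n) - trunc A m).rank ≤ 2 ^ (k + 1) * 2 ^ (m - n) := by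
  have hsize : 2 ^ m ≤ 2 ^ (m - n) * 2 ^ n := by rw [← pow_add, Nat.sub_add_cancel hnm]
  calc _ ≤ #{i : Fin (2 ^ m) | (i : ℕ) % 2 ^ n < 2 ^ k ∨ 2 ^ n < (i : ℕ) % 2 ^ n + 2 ^ k} := by
        refine Matrix.rank_le_card_of_support_subset _ _ fun i hi => ?_
        simp only [coe_filter, mem_univ, true_and, Set.mem_ofPred_eq]
        by_contra hint
        simp only [not_or, not_lt] at hint
        refine hi (funext fun j => ?_)
        simp [blockEmbed_trunc_apply_of_interior hper hsupp hkn i j hint.1 hint.2]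
    _ ≤ 2 ^ (m - n) * #{r ∈ range (2 ^ n) | r < 2 ^ k ∨ 2 ^ n < r + 2 ^ k} :=
        card_filter_mod_le hsize (fun r => r < 2 ^ k ∨ 2 ^ n < r + 2 ^ k)
    _ ≤ 2 ^ (m - n) * (2 * 2 ^ k) := by gcongr; exact card_filter_range_lt_or_lt_add_le _ _
    _ = 2 ^ (k + 1) * 2 ^ (m - n) := by ring

end Truncation

lemma exists_mul_two_pow_sub_div_two_pow_lt (C : ℝ) {ε : ℝ} (hε : 0 < ε) :
    ∃ N : ℕ, ∀ n m : ℕ, N ≤ n → n ≤ m → C * 2 ^ (m - n) / 2 ^ m < ε := by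
  obtain ⟨N, hN⟩ := pow_unbounded_of_one_lt (C / ε) one_lt_two
  refine ⟨N, fun n m hNn hnm => ?_⟩
  have hn : C / ε < 2 ^ n := hN.trans_le (pow_le_pow_right₀ one_le_two hNn)
  have hm : (2 : ℝ) ^ m = 2 ^ (m - n) * 2 ^ n := by rw [← pow_add, Nat.sub_add_cancel hnm]
  calc C * 2 ^ (m - n) / 2 ^ m = C / 2 ^ n := by rw [hm]; field_simp
    _ < ε := by rwa [div_lt_iff₀ (by positivity), mul_comm, ← div_lt_iff₀ hε]

theorem stmt9_general (A : ℤ → ℤ → ℂ) (k : ℕ)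
    (hper : ∀ x y : ℤ, A (x + 2 ^ k) (y + 2 ^ k) = A x y)
    (hsupp : ∀ x y : ℤ, (2 : ℤ) ^ k ≤ |x - y| → A x y = 0) :
    (∀ n m : ℕ, k < n → n ≤ m →
      Matrix.rank (blockEmbed n m (trunc A n) - trunc A m) ≤ 2 ^ (k + 1) * 2 ^ (m - n)) ∧
    (∀ ε : ℝ, 0 < ε → ∃ N : ℕ, ∀ n m : ℕ, N ≤ n → n ≤ m →
      (Matrix.rank (blockEmbed n m (trunc A n) - trunc A m) : ℝ) / 2 ^ m < ε) := by
  have hrank n m (hkn : k ≤ n) (hnm : n ≤ m) :=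
    rank_blockEmbed_trunc_sub_trunc_le hper hsupp hkn hnm
  refine ⟨fun n m hkn hnm => hrank n m hkn.le hnm, fun ε hε => ?_⟩
  obtain ⟨N, hN⟩ := exists_mul_two_pow_sub_div_two_pow_lt (2 ^ (k + 1)) hε
  refine ⟨max N k, fun n m hn hnm => lt_of_le_of_lt ?_ (hN n m (le_of_max_le_left hn) hnm)⟩
  gcongr
  exact_mod_cast hrank n m (le_of_max_le_right hn) hnm

/-- if `A` is a periodic operator with `A(x+2^k,y+2^k) = A(x,y)` and
`A(x,y) = 0` for `|x−y| ≥ 2^k`, then for `k < n ≤ m` the rank of `D^n_m(A_n) − A_m` is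
at most `2^{k+1}·2^{m−n}`; consequently `{A_n}` is Cauchy for the normalized rank
pseudometric. -/
theorem stmt9 (A : ℤ → ℤ → ℂ) (hA : IsPeriodicOp A) (k : ℕ) (hk : 1 ≤ k)
    (hper : ∀ x y : ℤ, A (x + 2 ^ k) (y + 2 ^ k) = A x y)
    (hsupp : ∀ x y : ℤ, (2 : ℤ) ^ k ≤ |x - y| → A x y = 0) :
    (∀ n m : ℕ, k < n → n ≤ m →
      Matrix.rank (blockEmbed n m (trunc A n) - trunc A m) ≤ 2 ^ (k + 1) * 2 ^ (m - n)) ∧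
    (∀ ε : ℝ, 0 < ε → ∃ N : ℕ, ∀ n m : ℕ, N ≤ n → n ≤ m →
      (Matrix.rank (blockEmbed n m (trunc A n) - trunc A m) : ℝ) / 2 ^ m < ε) :=
  stmt9_general A k hper hsupp
end

section
/- Let A be a periodic operator and k ≥ 1 be such that A(x+2^k, y+2^k) = A(x,y) for all x,y and A(x,y) = 0 whenever |x−y| ≥ 2^k. If A ≠ 0, then for every n > k the rank over ℂ of the 2^n × 2^n matrix A_n is at least 2^{n−k} − 1. Consequently, for a periodic operator A one has lim_{n→∞} rank(A_n)/2^n = 0 if and only if A = 0. -/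
/-!
Pick a nonzero entry `A(a, b)` that is the last nonzero entry of its row; by periodicity it can
be moved along the diagonal into `[0, 2^(k+1))²`. Periodicity again shows that the rows
`a + l 2^k` and columns `b + m 2^k` of `A_n`, `0 ≤ l, m < 2^(n-k) - 1`, form a lower triangular
matrix with constant diagonal `A(a, b) ≠ 0`. Hence `rank A_n ≥ 2^(n-k) - 1 ≥ 2^n / 2^(k+1)`.
-/

open Filter Topology

namespace Matrix

variable {m R : Type*} [Fintype m] [LinearOrder m] [CommRing R] [IsDomain R]

theorem rank_of_isLowerTriangular {A : Matrix m m R} (hA : A.IsLowerTriangular)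
    (hd : ∀ i, A.diag i ≠ 0) : A.rank = Fintype.card m := by
  classical
  have h := rank_mul_eq_right_of_isLowerTriangular A (1 : Matrix m m R) hA hd
  rwa [mul_one, rank_one] at h

end Matrix

section BandedPeriodic

variable {A : ℤ → ℤ → ℂ} {p : ℤ}

theorem apply_sub_int_mul_of_periodic (hper : ∀ x y, A (x + p) (y + p) = A x y) (m x y : ℤ) :
    A (x - m * p) (y - m * p) = A x y := by
  have hf : Function.Periodic (fun t => A (x + t) (y + t)) p := fun t => by
    simpa only [add_assoc] using hper (x + t) (y + t)
  simpa only [zero_sub, ← sub_eq_add_neg, add_zero, Int.cast_id] using hf.sub_int_mul_eq (x := 0) m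

theorem exists_last_nonzero_in_row (hsupp : ∀ x y, p ≤ |x - y| → A x y = 0) (hA : A ≠ 0) :
    ∃ x y, A x y ≠ 0 ∧ ∀ z, y < z → A x z = 0 := by
  obtain ⟨x, y, hxy⟩ : ∃ x y, A x y ≠ 0 := by
    by_contra! h
    exact hA (funext₂ h)
  have hbdd : ∃ b, ∀ z, A x z ≠ 0 → z ≤ b := ⟨x + p, fun z hz => by
    have := lt_of_not_ge fun h => hz (hsupp x z h)
    linarith [neg_abs_le (x - z)]⟩
  obtain ⟨y₀, hy₀, hmax⟩ := Int.exists_greatest_of_bdd hbdd ⟨y, hxy⟩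
  exact ⟨x, y₀, hy₀, fun z hz => by_contra fun h => absurd (hmax z h) (not_le.mpr hz)⟩

theorem exists_last_nonzero_in_row_lt_two_mul (hp : 0 < p)
    (hper : ∀ x y, A (x + p) (y + p) = A x y) (hsupp : ∀ x y, p ≤ |x - y| → A x y = 0)
    (hA : A ≠ 0) :
    ∃ a b : ℕ, (a : ℤ) < 2 * p ∧ (b : ℤ) < 2 * p ∧ A a b ≠ 0 ∧
      ∀ z : ℤ, (b : ℤ) < z → A a z = 0 := by
  obtain ⟨x, y, hxy, hlast⟩ := exists_last_nonzero_in_row hsupp hA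
  have hband : |x - y| < p := lt_of_not_ge fun h => hxy (hsupp x y h)
  obtain ⟨hband₁, hband₂⟩ := abs_lt.mp hband
  -- Translating by `-s p` puts `min x y` into `[0, p)`, hence both coordinates into `[0, 2p)`.
  set s := min x y / p
  have hmod : min x y % p = min x y - p * s := Int.emod_def _ _
  have hmod₀ := Int.emod_nonneg (min x y) hp.ne'
  have hmod₁ := Int.emod_lt_of_pos (min x y) hp
  have hx := min_le_left x y
  have hy := min_le_right x y
  have hmin := min_choice x y
  obtain ⟨a, ha⟩ := Int.eq_ofNat_of_zero_le (a := x - s * p) (by rcases hmin with h | h <;> linarith)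
  obtain ⟨b, hb⟩ := Int.eq_ofNat_of_zero_le (a := y - s * p) (by rcases hmin with h | h <;> linarith)
  refine ⟨a, b, ?_, ?_, ?_, fun z hz => ?_⟩
  · rcases hmin with h | h <;> linarith
  · rcases hmin with h | h <;> linarith
  · rwa [← ha, ← hb, apply_sub_int_mul_of_periodic hper]
  · rw [← ha, ← apply_sub_int_mul_of_periodic hper (-s), neg_mul, sub_neg_eq_add, sub_neg_eq_add,
      sub_add_cancel]
    exact hlast _ (by linarith)

end BandedPeriodic

theorem add_mul_two_pow_lt_two_pow {k n c l : ℕ} (hn : k < n) (hc : c < 2 * 2 ^ k)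
    (hl : l < 2 ^ (n - k) - 1) : c + l * 2 ^ k < 2 ^ n := by
  have hsplit : 2 ^ n = 2 ^ (n - k) * 2 ^ k := by rw [← pow_add, Nat.sub_add_cancel hn.le]
  have hl' : l + 2 ≤ 2 ^ (n - k) := by omega
  calc c + l * 2 ^ k < (l + 2) * 2 ^ k := by linarith
    _ ≤ 2 ^ n := hsplit ▸ Nat.mul_le_mul_right _ hl'

theorem le_rank_trunc {A : ℤ → ℤ → ℂ} {k : ℕ} (hper : ∀ x y, A (x + 2 ^ k) (y + 2 ^ k) = A x y)
    {a b : ℕ} (ha : a < 2 * 2 ^ k) (hb : b < 2 * 2 ^ k) (hab : A a b ≠ 0)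
    (hlast : ∀ z : ℤ, (b : ℤ) < z → A a z = 0) {n : ℕ} (hn : k < n) :
    2 ^ (n - k) - 1 ≤ (trunc A n).rank := by
  let B := (trunc A n).submatrix
    (fun l : Fin (2 ^ (n - k) - 1) => ⟨a + l * 2 ^ k, add_mul_two_pow_lt_two_pow hn ha l.isLt⟩)
    (fun m : Fin (2 ^ (n - k) - 1) => ⟨b + m * 2 ^ k, add_mul_two_pow_lt_two_pow hn hb m.isLt⟩)
  have hB : ∀ l m, B l m = A a (b + ((m : ℤ) - l) * 2 ^ k) := fun l m => by
    rw [← apply_sub_int_mul_of_periodic hper (-l)]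
    simp only [B, Matrix.submatrix_apply, trunc]
    push_cast
    ring_nf
  have hlower : B.IsLowerTriangular := fun l m hlm => by
    have hlm' : (l : ℤ) < m := by exact_mod_cast Fin.lt_def.mp (OrderDual.toDual_lt_toDual.mp hlm)
    show B l m = 0
    rw [hB]
    exact hlast _ (by nlinarith [pow_pos (two_pos : (0 : ℤ) < 2) k])
  have hdiag : ∀ l, B.diag l ≠ 0 := fun l => by simpa [hB] using hab
  calc 2 ^ (n - k) - 1 = B.rank := by
        rw [Matrix.rank_of_isLowerTriangular hlower hdiag, Fintype.card_fin]
    _ ≤ (trunc A n).rank := Matrix.rank_submatrix_le _ _ _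

theorem inv_two_pow_succ_le_div {k n r : ℕ} (hn : k < n) (hr : 2 ^ (n - k) - 1 ≤ r) :
    ((2 : ℝ) ^ (k + 1))⁻¹ ≤ r / 2 ^ n := by
  have hsplit : 2 ^ n = 2 ^ (n - k - 1) * 2 ^ (k + 1) := by rw [← pow_add]; congr 1; omega
  have hhalf : 2 ^ (n - k) = 2 * 2 ^ (n - k - 1) := by rw [← pow_succ']; congr 1; omega
  have hnat : 2 ^ n ≤ r * 2 ^ (k + 1) := by
    rw [hsplit]
    exact Nat.mul_le_mul_right _ (by have := Nat.one_le_two_pow (n := n - k - 1); omega)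
  rw [inv_le_iff_one_le_mul₀ (by positivity), div_mul_eq_mul_div, le_div_iff₀ (by positivity),
    one_mul]
  exact_mod_cast hnat

theorem stmt10_general (A : ℤ → ℤ → ℂ) (k : ℕ)
    (hper : ∀ x y : ℤ, A (x + 2 ^ k) (y + 2 ^ k) = A x y)
    (hsupp : ∀ x y : ℤ, (2 : ℤ) ^ k ≤ |x - y| → A x y = 0) :
    (A ≠ 0 → ∀ n : ℕ, k < n → 2 ^ (n - k) - 1 ≤ Matrix.rank (trunc A n)) ∧
    (Filter.Tendsto (fun n : ℕ => (Matrix.rank (trunc A n) : ℝ) / 2 ^ n)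
        Filter.atTop (nhds 0) ↔ A = 0) := by
  have hrank (hA : A ≠ 0) (n : ℕ) (hn : k < n) : 2 ^ (n - k) - 1 ≤ (trunc A n).rank := by
    obtain ⟨a, b, ha, hb, hab, hlast⟩ :=
      exists_last_nonzero_in_row_lt_two_mul (by positivity) hper hsupp hA
    exact le_rank_trunc hper (by exact_mod_cast ha) (by exact_mod_cast hb) hab hlast hn
  refine ⟨hrank, fun htend => by_contra fun hA => ?_, ?_⟩
  · have hlow := ge_of_tendsto htend <| eventually_atTop.mpr
      ⟨k + 1, fun n hn => inv_two_pow_succ_le_div hn (hrank hA n hn)⟩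
    exact absurd hlow (not_le.mpr (by positivity))
  · rintro rfl
    have hzero (n : ℕ) : trunc (0 : ℤ → ℤ → ℂ) n = 0 := rfl
    simp only [hzero, Matrix.rank_zero, Nat.cast_zero, zero_div]
    exact tendsto_const_nhds

/-- if `A` is a periodic operator with `A(x+2^k,y+2^k) = A(x,y)` and
`A(x,y) = 0` for `|x−y| ≥ 2^k`, and `A ≠ 0`, then for `n > k` the rank of `A_n` is at
least `2^{n−k} − 1`; consequently `lim_n rank(A_n)/2^n = 0` if and only if `A = 0`. -/
theorem stmt10 (A : ℤ → ℤ → ℂ) (hA : IsPeriodicOp A) (k : ℕ) (hk : 1 ≤ k)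
    (hper : ∀ x y : ℤ, A (x + 2 ^ k) (y + 2 ^ k) = A x y)
    (hsupp : ∀ x y : ℤ, (2 : ℤ) ^ k ≤ |x - y| → A x y = 0) :
    (A ≠ 0 → ∀ n : ℕ, k < n → 2 ^ (n - k) - 1 ≤ Matrix.rank (trunc A n)) ∧
    (Filter.Tendsto (fun n : ℕ => (Matrix.rank (trunc A n) : ℝ) / 2 ^ n)
        Filter.atTop (nhds 0) ↔ A = 0) :=
  stmt10_general A k hper hsupp
end

section
/- For all periodic operators A and B, lim_{n→∞} rank((AB)_n − A_n·B_n)/2^n = 0, where (AB)_n is the truncation of the product periodic operator AB and A_n·B_n is the product of the 2^n × 2^n matrices A_n and B_n. -/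
open Filter Topology

/-- The product `(AB)(x,y) = ∑_z A(x,z)·B(z,y)` (a finite sum for periodic operators). -/
noncomputable def opMul (A B : ℤ → ℤ → ℂ) : ℤ → ℤ → ℂ := fun x y => ∑ᶠ z : ℤ, A x z * B z y

def IsBandedOp (A : ℤ → ℤ → ℂ) (w : ℕ) : Prop :=
  ∀ x y : ℤ, (w : ℤ) < |x - y| → A x y = 0

lemma IsPeriodicOp.exists_isBandedOp {A : ℤ → ℤ → ℂ} (hA : IsPeriodicOp A) :
    ∃ w, IsBandedOp A w := by
  obtain ⟨a, -, hband, -⟩ := hA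
  exact ⟨2 ^ a, fun x y h => hband x y (by exact_mod_cast h)⟩

lemma Fin.card_filter_lt_or_le_add_le (N w : ℕ) :
    (Finset.univ.filter fun i : Fin N => (i : ℕ) < w ∨ N ≤ i + w).card ≤ 2 * w := by
  rw [← Finset.card_map Fin.valEmbedding]
  have hsub : (Finset.univ.filter fun i : Fin N => (i : ℕ) < w ∨ N ≤ i + w).map Fin.valEmbedding
      ⊆ Finset.range w ∪ Finset.Ico (N - w) N := by
    intro k hk
    simp only [Finset.mem_map, Finset.mem_filter, Finset.mem_univ, true_and,
      Fin.valEmbedding_apply] at hk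
    obtain ⟨i, hi, rfl⟩ := hk
    simp only [Finset.mem_union, Finset.mem_range, Finset.mem_Ico]
    omega
  calc _ ≤ (Finset.range w ∪ Finset.Ico (N - w) N).card := Finset.card_le_card hsub
    _ ≤ (Finset.range w).card + (Finset.Ico (N - w) N).card := Finset.card_union_le _ _
    _ ≤ 2 * w := by simp only [Finset.card_range, Nat.card_Ico]; omega

section Banded

variable {A : ℤ → ℤ → ℂ} {w : ℕ}

lemma IsBandedOp.opMul_eq_sum_fin (hA : IsBandedOp A w) (B : ℤ → ℤ → ℂ) {N : ℕ} {x : ℤ}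
    (hlo : (w : ℤ) ≤ x) (hhi : x + w < N) (y : ℤ) :
    opMul A B x y = ∑ k : Fin N, A x k * B k y := by
  let window : Finset ℤ := (Finset.univ : Finset (Fin N)).map
    (Fin.valEmbedding.trans Nat.castEmbedding)
  have hsupp : Function.support (fun z => A x z * B z y) ⊆ window := by
    intro z hz
    have hz_near : |x - z| ≤ w := by
      by_contra h
      exact hz (by simp only [hA x z (not_le.mp h), zero_mul])
    rw [abs_le] at hz_near
    have hz_cast : ((z.toNat : ℕ) : ℤ) = z := Int.toNat_of_nonneg (by omega)
    exact Finset.mem_map.mpr ⟨⟨z.toNat, by omega⟩, Finset.mem_univ _, hz_cast⟩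
  rw [opMul, finsum_eq_sum_of_support_subset _ hsupp, Finset.sum_map]
  rfl

lemma IsBandedOp.trunc_opMul_sub_mul_apply_eq_zero (hA : IsBandedOp A w) (B : ℤ → ℤ → ℂ)
    {n : ℕ} (i j : Fin (2 ^ n)) (hlo : w ≤ (i : ℕ)) (hhi : (i : ℕ) + w < 2 ^ n) :
    (trunc (opMul A B) n - trunc A n * trunc B n) i j = 0 := by
  rw [Matrix.sub_apply, sub_eq_zero, trunc,
    hA.opMul_eq_sum_fin B (N := 2 ^ n) (by exact_mod_cast hlo) (by exact_mod_cast hhi)]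
  rfl

lemma IsBandedOp.rank_trunc_opMul_sub_mul_le (hA : IsBandedOp A w) (B : ℤ → ℤ → ℂ) (n : ℕ) :
    (trunc (opMul A B) n - trunc A n * trunc B n).rank ≤ 2 * w := by
  refine (Matrix.rank_le_card_of_support_subset _ _ fun i hi => ?_).trans
    (Fin.card_filter_lt_or_le_add_le (2 ^ n) w)
  rw [Finset.mem_coe, Finset.mem_filter]
  refine ⟨Finset.mem_univ _, ?_⟩
  by_contra! h
  exact hi (funext fun j => hA.trunc_opMul_sub_mul_apply_eq_zero B i j h.1 (by omega))

end Banded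

theorem stmt11_general (A B : ℤ → ℤ → ℂ) (hA : IsPeriodicOp A) :
    Filter.Tendsto
      (fun n : ℕ => (Matrix.rank (trunc (opMul A B) n - trunc A n * trunc B n) : ℝ) / 2 ^ n)
      Filter.atTop (nhds 0) := by
  obtain ⟨w, hw⟩ := hA.exists_isBandedOp
  refine squeeze_zero (fun n => by positivity) (fun n => ?_)
    (tendsto_const_nhds.div_atTop (tendsto_pow_atTop_atTop_of_one_lt one_lt_two) :
      Tendsto (fun n : ℕ => (2 * w : ℝ) / 2 ^ n) atTop (𝓝 0))
  gcongr
  exact_mod_cast hw.rank_trunc_opMul_sub_mul_le B n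

/-- for periodic operators `A` and `B`,
`lim_n rank((AB)_n − A_n·B_n)/2^n = 0`. -/
theorem stmt11 (A B : ℤ → ℤ → ℂ) (hA : IsPeriodicOp A) (hB : IsPeriodicOp B) :
    Filter.Tendsto
      (fun n : ℕ => (Matrix.rank (trunc (opMul A B) n - trunc A n * trunc B n) : ℝ) / 2 ^ n)
      Filter.atTop (nhds 0) :=
  stmt11_general A B hA
end

section
/- For every periodic operator A, the sequence of normalized ranks rank(A_n)/2^n of the truncated matrices converges as n → ∞. -/
/-!
Split the indices of the `2N × 2N` truncation into two halves. When `N` is a multiple of the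
period, both diagonal blocks equal the `N × N` truncation, while by the band condition the
off-diagonal blocks are supported in the first `w` columns (resp. rows) of the second half,
`w` being the bandwidth. Hence the `2N` truncation differs from the block-diagonal matrix
`diag(A_N, A_N)` by a matrix of rank at most `2w`, so `|rank A_{2N} - 2 rank A_N| ≤ 2w`, and the
normalized ranks move by at most `w / N` when `N` doubles. These steps are summable along
`N = 2^k`, so the sequence is Cauchy.
-/

open Filter Topology

open Module

namespace Submodule

variable {K V W : Type*} [DivisionRing K] [AddCommGroup V] [Module K V] [AddCommGroup W]
  [Module K W]

theorem finrank_prod (p : Submodule K V) (q : Submodule K W) [FiniteDimensional K p]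
    [FiniteDimensional K q] : finrank K (p.prod q) = finrank K p + finrank K q := by
  rw [← p.range_subtype, ← q.range_subtype, ← LinearMap.range_prodMap,
    LinearMap.finrank_range_of_inj
      (Prod.map_injective.2 ⟨p.injective_subtype, q.injective_subtype⟩),
    Module.finrank_prod, p.range_subtype, q.range_subtype]

end Submodule

namespace Matrix

variable {K : Type*} [Field K] {m n : Type*} [Fintype n]

theorem rank_add_le (A B : Matrix m n K) : (A + B).rank ≤ A.rank + B.rank := by
  rw [rank, rank, rank, mulVecLin_add]
  exact (Submodule.finrank_mono (LinearMap.range_add_le _ _)).trans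
    (Submodule.finrank_add_le_finrank_add_finrank _ _)

theorem rank_fromBlocks_zero₁₂_zero₂₁ [Fintype m] (P : Matrix m m K) (Q : Matrix n n K) :
    (fromBlocks P 0 0 Q).rank = P.rank + Q.rank := by
  classical
  let b := (Pi.basisFun K m).prod (Pi.basisFun K n)
  have hblocks : fromBlocks P 0 0 Q = LinearMap.toMatrix b b (P.toLin'.prodMap Q.toLin') := by
    rw [LinearMap.toMatrix_prodMap, LinearMap.toMatrix_eq_toMatrix',
      LinearMap.toMatrix_eq_toMatrix', LinearMap.toMatrix'_toLin', LinearMap.toMatrix'_toLin']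
  rw [rank_eq_finrank_range_toLin _ b b, hblocks, toLin_toMatrix, LinearMap.range_prodMap,
    Submodule.finrank_prod, P.rank_eq_finrank_range_toLin (Pi.basisFun K m) (Pi.basisFun K m),
    Q.rank_eq_finrank_range_toLin (Pi.basisFun K n) (Pi.basisFun K n), toLin_eq_toLin',
    toLin_eq_toLin']

theorem rank_le_card_add_card [Fintype m] (A : Matrix m n K) (s : Finset m) (t : Finset n)
    (h : ∀ i ∉ s, ∀ j ∉ t, A i j = 0) : A.rank ≤ s.card + t.card := by
  classical
  let R : Matrix m n K := of fun i j => if i ∈ s then A i j else 0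
  have hR : R.rank ≤ s.card := by
    refine R.rank_le_card_of_support_subset s <| Function.support_subset_iff'.2 fun i hi => ?_
    ext j
    simp [R, show i ∉ s from hi]
  have hC : (A - R).rank ≤ t.card := by
    rw [← rank_transpose]
    refine (A - R)ᵀ.rank_le_card_of_support_subset t <|
      Function.support_subset_iff'.2 fun j hj => ?_
    ext i
    by_cases hi : i ∈ s
    · simp [R, hi]
    · simp [R, hi, h i hi j hj]
  calc A.rank = (R + (A - R)).rank := by rw [add_sub_cancel]
    _ ≤ s.card + t.card := (rank_add_le _ _).trans (add_le_add hR hC)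

theorem rank_le_rank_add_card_add_card [Fintype m] (A B : Matrix m n K) (s : Finset m)
    (t : Finset n) (h : ∀ i ∉ s, ∀ j ∉ t, A i j = B i j) :
    A.rank ≤ B.rank + (s.card + t.card) :=
  calc A.rank = (B + (A - B)).rank := by rw [add_sub_cancel]
    _ ≤ B.rank + (s.card + t.card) :=
      (rank_add_le _ _).trans <| Nat.add_le_add_left ((A - B).rank_le_card_add_card s t
        fun i hi j hj => sub_eq_zero.2 (h i hi j hj)) _

end Matrix

open Matrix

section Window

variable {K : Type*} [Field K] (A : ℤ → ℤ → K) {N w : ℕ}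

def window (N : ℕ) : Matrix (Fin N) (Fin N) K :=
  of fun i j => A (i : ℕ) (j : ℕ)

def secondBlockHead (N w : ℕ) : Finset (Fin N ⊕ Fin N) :=
  (Finset.univ.filter fun i : Fin N => (i : ℕ) < w).map Function.Embedding.inr

lemma card_secondBlockHead_le : (secondBlockHead N w).card ≤ w := by
  rw [secondBlockHead, Finset.card_map, Fin.card_filter_val_lt]
  exact min_le_right N w

variable {A}

lemma window_add_self_submatrix_eq_fromBlocks (hband : ∀ x y, (w : ℤ) < |x - y| → A x y = 0)
    (hper : ∀ x y, A (x + N) (y + N) = A x y) (i : Fin N ⊕ Fin N)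
    (hi : i ∉ secondBlockHead N w) (j : Fin N ⊕ Fin N) (hj : j ∉ secondBlockHead N w) :
    (window A (N + N)).submatrix finSumFinEquiv finSumFinEquiv i j =
      fromBlocks (window A N) 0 0 (window A N) i j := by
  rcases i with i | i <;> rcases j with j | j
  all_goals simp only [secondBlockHead, Finset.mem_map, Finset.mem_filter, Finset.mem_univ,
    true_and, Function.Embedding.inr_apply, reduceCtorEq, and_false, exists_false,
    not_false_eq_true, Sum.inr.injEq, exists_eq_right, not_lt, window, submatrix_apply,
    finSumFinEquiv_apply_left, finSumFinEquiv_apply_right, Fin.natAdd_eq_addNat, of_apply,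
    Fin.val_castAdd, Fin.val_addNat, Nat.cast_add, fromBlocks_apply₁₁, fromBlocks_apply₁₂,
    fromBlocks_apply₂₁, fromBlocks_apply₂₂, Matrix.zero_apply] at hi hj ⊢
  · have := i.isLt
    exact hband _ _ (lt_abs.2 (Or.inr (by omega)))
  · have := j.isLt
    exact hband _ _ (lt_abs.2 (Or.inl (by omega)))
  · exact hper _ _

lemma rank_window_add_self_le (hband : ∀ x y, (w : ℤ) < |x - y| → A x y = 0)
    (hper : ∀ x y, A (x + N) (y + N) = A x y) :
    (window A (N + N)).rank ≤ 2 * (window A N).rank + 2 * w := by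
  rw [← rank_submatrix _ finSumFinEquiv finSumFinEquiv, two_mul,
    ← rank_fromBlocks_zero₁₂_zero₂₁, two_mul]
  exact (rank_le_rank_add_card_add_card _ _ _ _
    (window_add_self_submatrix_eq_fromBlocks hband hper)).trans
    (Nat.add_le_add_left (Nat.add_le_add card_secondBlockHead_le card_secondBlockHead_le) _)

lemma two_mul_rank_window_le (hband : ∀ x y, (w : ℤ) < |x - y| → A x y = 0)
    (hper : ∀ x y, A (x + N) (y + N) = A x y) :
    2 * (window A N).rank ≤ (window A (N + N)).rank + 2 * w := by
  rw [← rank_submatrix (window A (N + N)) finSumFinEquiv finSumFinEquiv, two_mul,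
    ← rank_fromBlocks_zero₁₂_zero₂₁, two_mul]
  exact (rank_le_rank_add_card_add_card _ _ _ _
    fun i hi j hj => (window_add_self_submatrix_eq_fromBlocks hband hper i hi j hj).symm).trans
    (Nat.add_le_add_left (Nat.add_le_add card_secondBlockHead_le card_secondBlockHead_le) _)

lemma dist_rank_window_div_le (hband : ∀ x y, (w : ℤ) < |x - y| → A x y = 0)
    (hper : ∀ x y, A (x + N) (y + N) = A x y) (hN : 0 < N) :
    dist ((window A N).rank / N : ℝ) ((window A (N + N)).rank / (N + N : ℝ)) ≤ w / N := by
  have h₁ : ((window A (N + N)).rank : ℝ) ≤ 2 * (window A N).rank + 2 * w := by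
    exact_mod_cast rank_window_add_self_le hband hper
  have h₂ : 2 * ((window A N).rank : ℝ) ≤ (window A (N + N)).rank + 2 * w := by
    exact_mod_cast two_mul_rank_window_le hband hper
  have hdefect : |2 * ((window A N).rank : ℝ) - (window A (N + N)).rank| ≤ 2 * w :=
    abs_sub_le_iff.2 ⟨by linarith, by linarith⟩
  calc dist ((window A N).rank / N : ℝ) ((window A (N + N)).rank / (N + N : ℝ))
      = |2 * ((window A N).rank : ℝ) - (window A (N + N)).rank| / (2 * N) := by
        rw [Real.dist_eq, ← abs_of_pos (by positivity : (0 : ℝ) < 2 * N), ← abs_div]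
        congr 1
        field_simp
        ring
    _ ≤ 2 * w / (2 * N) := by gcongr
    _ = w / N := mul_div_mul_left _ _ two_ne_zero

end Window

lemma trunc_eq_window (A : ℤ → ℤ → ℂ) (n : ℕ) : trunc A n = window A (2 ^ n) := rfl

lemma dist_rank_trunc_div_le {A : ℤ → ℤ → ℂ} {n : ℕ}
    (hband : ∀ x y : ℤ, |x - y| > 2 ^ n → A x y = 0)
    (hper : ∀ x y : ℤ, A (x + 2 ^ n) (y + 2 ^ n) = A x y) (k : ℕ) :
    dist ((trunc A (k + n)).rank / 2 ^ (k + n) : ℝ)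
      ((trunc A (k + 1 + n)).rank / 2 ^ (k + 1 + n)) ≤ (1 / 2) ^ k := by
  have hper' : ∀ x y, A (x + (2 ^ (k + n) : ℕ)) (y + (2 ^ (k + n) : ℕ)) = A x y := by
    have hperiodic : Function.Periodic (fun z : ℤ × ℤ => A z.1 z.2) (2 ^ n, 2 ^ n) :=
      fun z => hper z.1 z.2
    intro x y
    simpa [pow_add] using hperiodic.nat_mul (2 ^ k) (x, y)
  have hdist := dist_rank_window_div_le (N := 2 ^ (k + n)) (w := 2 ^ n)
    (fun x y h => hband x y (by exact_mod_cast h)) hper' (by positivity)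
  push_cast at hdist
  have hdouble : 2 ^ (k + 1 + n) = 2 ^ (k + n) + 2 ^ (k + n) := by ring
  have hdoubleℝ : (2 : ℝ) ^ (k + 1 + n) = 2 ^ (k + n) + 2 ^ (k + n) := by ring
  rw [trunc_eq_window, trunc_eq_window, hdouble, hdoubleℝ]
  refine hdist.trans_eq ?_
  rw [pow_add, one_div, inv_pow]
  field_simp

/-- for every periodic operator `A` the normalized ranks
`rank(A_n)/2^n` of the truncated matrices converge as `n → ∞`. -/
theorem stmt12 (A : ℤ → ℤ → ℂ) (hA : IsPeriodicOp A) :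
    ∃ L : ℝ, Filter.Tendsto (fun n : ℕ => (Matrix.rank (trunc A n) : ℝ) / 2 ^ n)
      Filter.atTop (nhds L) := by
  obtain ⟨n, -, hband, hper⟩ := hA
  obtain ⟨L, hL⟩ := cauchySeq_tendsto_of_complete
    (cauchySeq_of_le_geometric (1 / 2) 1 (by norm_num)
      fun k => (dist_rank_trunc_div_le hband hper k).trans_eq (one_mul _).symm)
  exact ⟨L, (tendsto_add_atTop_iff_nat n).1 hL⟩
end

section
/- Let A be a periodic operator, let k ≥ 1, and let l ≥ 1 be such that A(x,y) = 0 whenever |x−y| ≥ l. Let n be such that 2^n is a period of A (i.e., A(x+2^n,y+2^n) = A(x,y)). Then for every integer x with 2lk < x < 2^n − 2lk, the diagonal entry ((A*A)^k)(x,x) of the k-th power of A*A in the algebra of periodic operators equals the (x,x) entry of the matrix ((A_n)ᴴ A_n)^k, where (A_n)ᴴ is the conjugate transpose of A_n. -/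
/-!
The band structure does everything. `A*A` vanishes more than `2l` off the diagonal, hence
`(A*A)^k` vanishes more than `2lk` off it. An entry `(A*A)(z,y)` only involves `A(w,·)` with
`|w - z| ≤ l`, so it agrees with `(A_nᴴ A_n)(z,y)` as long as row `z` is at least `l` away from
the edges of the window `[0, 2^n)`. By induction on `k`, row `x` of `(A*A)^(k+1)` only reads rows
`z` of `A*A` with `|x - z| ≤ 2lk`, all of which are far enough from the edges.
-/

open Filter Topology Matrix

/-- The adjoint `A*(x,y) = conj (A(y,x))`. -/
def opAdj (A : ℤ → ℤ → ℂ) : ℤ → ℤ → ℂ := fun x y => starRingEnd ℂ (A y x)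

/-- The identity operator `1(x,y) = δ_{x,y}`. -/
def opOne : ℤ → ℤ → ℂ := fun x y => if x = y then 1 else 0

/-- Powers in the algebra of periodic operators. -/
noncomputable def opPow (A : ℤ → ℤ → ℂ) : ℕ → (ℤ → ℤ → ℂ)
  | 0 => opOne
  | k + 1 => opMul (opPow A k) A

def IsBanded (A : ℤ → ℤ → ℂ) (w : ℕ) : Prop :=
  ∀ x y : ℤ, (w : ℤ) < |x - y| → A x y = 0

namespace IsBanded

variable {A B : ℤ → ℤ → ℂ} {a b w : ℕ}

lemma abs_sub_le_of_ne_zero (hA : IsBanded A w) {x y : ℤ} (h : A x y ≠ 0) : |x - y| ≤ w :=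
  not_lt.mp fun hlt => h (hA x y hlt)

lemma opAdj (hA : IsBanded A w) : IsBanded (opAdj A) w := fun x y h => by
  rw [_root_.opAdj, hA y x (by rwa [abs_sub_comm]), map_zero]

lemma opMul (hA : IsBanded A a) (hB : IsBanded B b) : IsBanded (opMul A B) (a + b) :=
  fun x y h => finsum_eq_zero_of_forall_eq_zero fun z => by
    by_cases hxz : (a : ℤ) < |x - z|
    · rw [hA x z hxz, zero_mul]
    · have hzy : (b : ℤ) < |z - y| := by
        have := abs_sub_le x z y
        push_cast at h
        linarith
      rw [hB z y hzy, mul_zero]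

lemma opPow (hA : IsBanded A w) : ∀ k : ℕ, IsBanded (opPow A k) (w * k)
  | 0 => fun x y h => if_neg fun hxy => by simp [hxy] at h
  | k + 1 => by
    rw [_root_.opPow, mul_add_one]
    exact (hA.opPow k).opMul hA

end IsBanded

lemma finsum_int_eq_sum_fin {N : ℕ} (f : ℤ → ℂ) (hf : ∀ z, f z ≠ 0 → 0 ≤ z ∧ z < N) :
    ∑ᶠ z, f z = ∑ i : Fin N, f i := by
  rw [finsum_eq_sum_of_support_subset f (s := (Finset.range N).map Nat.castEmbedding),
    Finset.sum_map, Fin.sum_univ_eq_sum_range (fun i => f i)]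
  · rfl
  · intro z hz
    obtain ⟨hz0, hzN⟩ := hf z hz
    lift z to ℕ using hz0
    simpa using hzN

lemma conjTranspose_trunc (A : ℤ → ℤ → ℂ) (n : ℕ) : (trunc A n)ᴴ = trunc (opAdj A) n := rfl

lemma trunc_mul_trunc_apply {A : ℤ → ℤ → ℂ} {l n : ℕ} (hA : IsBanded A l) (B : ℤ → ℤ → ℂ)
    (i j : Fin (2 ^ n)) (hi₁ : (l : ℤ) ≤ (i : ℕ))
    (hi₂ : ((i : ℕ) : ℤ) + l < (2 ^ n : ℕ)) :
    (trunc A n * trunc B n) i j = opMul A B i j := by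
  rw [Matrix.mul_apply, opMul, finsum_int_eq_sum_fin _ fun z hz => ?_]
  · rfl
  have := abs_le.mp (hA.abs_sub_le_of_ne_zero (left_ne_zero_of_mul hz))
  omega

lemma pow_apply_eq_opPow_apply {B : ℤ → ℤ → ℂ} {w N : ℕ} (hB : IsBanded B w)
    (M : Matrix (Fin N) (Fin N) ℂ)
    (hM : ∀ i j : Fin N, (w : ℤ) ≤ (i : ℕ) → ((i : ℕ) : ℤ) + w < N → M i j = B i j) :
    ∀ (k : ℕ) (i j : Fin N), ((w * k : ℕ) : ℤ) < (i : ℕ) → ((i : ℕ) : ℤ) + (w * k : ℕ) < N →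
      (M ^ k) i j = opPow B k i j
  | 0, i, j, _, _ => by simp [Matrix.one_apply, opPow, opOne, Fin.ext_iff]
  | k + 1, i, j, hi₁, hi₂ => by
    have hrow : ∀ z, opPow B k i z ≠ 0 → (w : ℤ) < z ∧ z + w < N := fun z hz => by
      have := abs_le.mp ((hB.opPow k).abs_sub_le_of_ne_zero hz)
      push_cast at this hi₁ hi₂
      constructor <;> linarith
    rw [pow_succ, Matrix.mul_apply, opPow, _root_.opMul,
      finsum_int_eq_sum_fin (N := N) _ fun z hz => ?range]
    case range =>
      have := hrow z (left_ne_zero_of_mul hz)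
      omega
    refine Finset.sum_congr rfl fun z _ => ?_
    have ih : (M ^ k) i z = opPow B k i z :=
      pow_apply_eq_opPow_apply hB M hM k i z (by push_cast at hi₁ ⊢; linarith)
        (by push_cast at hi₂ ⊢; linarith)
    rw [ih]
    by_cases hz : opPow B k i z = 0
    · rw [hz, zero_mul, zero_mul]
    · obtain ⟨hz₁, hz₂⟩ := hrow z hz
      rw [hM z j hz₁.le hz₂]

theorem stmt14_general (A : ℤ → ℤ → ℂ) (k l : ℕ)
    (hsupp : ∀ x y : ℤ, (l : ℤ) ≤ |x - y| → A x y = 0) (n : ℕ)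
    (x : ℤ) (hx1 : ((2 * l * k : ℕ) : ℤ) < x) (hx2 : x < 2 ^ n - ((2 * l * k : ℕ) : ℤ))
    (i : Fin (2 ^ n)) (hi : ((i : ℕ) : ℤ) = x) :
    opPow (opMul (opAdj A) A) k x x = (((trunc A n)ᴴ * trunc A n) ^ k) i i := by
  subst hi
  have hA : IsBanded A l := fun x y h => hsupp x y h.le
  have hAA : IsBanded (opMul (opAdj A) A) (l + l) := hA.opAdj.opMul hA
  refine (pow_apply_eq_opPow_apply hAA _ (fun i j hi₁ hi₂ => ?_) k i i ?_ ?_).symm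
  · rw [conjTranspose_trunc]
    exact trunc_mul_trunc_apply hA.opAdj A i j (by omega) (by omega)
  · push_cast at hx1 ⊢; linarith
  · push_cast at hx2 ⊢; linarith

/-- if `A` is a periodic operator with `A(x,y) = 0` for `|x−y| ≥ l`, and
`2^n` is a period of `A`, then for `2lk < x < 2^n − 2lk` the diagonal entry
`((A*A)^k)(x,x)` (computed in the algebra of periodic operators) equals the `(x,x)`
entry of the matrix `((A_n)ᴴ A_n)^k`. -/
theorem stmt14 (A : ℤ → ℤ → ℂ) (hA : IsPeriodicOp A) (k l : ℕ) (hk : 1 ≤ k) (hl : 1 ≤ l)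
    (hsupp : ∀ x y : ℤ, (l : ℤ) ≤ |x - y| → A x y = 0) (n : ℕ)
    (hper : ∀ x y : ℤ, A (x + 2 ^ n) (y + 2 ^ n) = A x y)
    (x : ℤ) (hx1 : ((2 * l * k : ℕ) : ℤ) < x) (hx2 : x < 2 ^ n - ((2 * l * k : ℕ) : ℤ))
    (i : Fin (2 ^ n)) (hi : ((i : ℕ) : ℤ) = x) :
    opPow (opMul (opAdj A) A) k x x = (((trunc A n)ᴴ * trunc A n) ^ k) i i :=
  stmt14_general A k l hsupp n x hx1 hx2 i hi
end
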